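/- arXiv:2512.13721 — 7 statements merged into one kernel-verified Lean document; each statement's English description precedes it below -/
import Mathlib

section
/- Let E : (ℕ → ℝ≥0) → ℝ≥0∞ satisfy: (i) permutation invariance: E(x ∘ σ) = E(x) for every bijection σ : ℕ ≃ ℕ and every x : ℕ → ℝ≥0; (ii) additivity on disjoint supports: E(x + y) = E(x) + E(y) whenever for every n : ℕ either x n = 0 or y n = 0; (iii) E(0) = 0; (iv) monotone continuity: whenever (x_k)_{k∈ℕ} is a sequence of functions ℕ → ℝ≥0 that is pointwise nondecreasing in k and converges pointwise to x, then E(x_k) → E(x) in ℝ≥0∞. Define h : ℝ≥0 → ℝ≥0∞ by h(t) = E(δ₀ t), where δ₀ t is the sequence taking the value t at index 0 and 0 at every other index. Then h(0) = 0 and for every x : ℕ → ℝ≥0 one has E(x) = ∑'_{n} h(x n), the tsum being taken in ℝ≥0∞. -/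
open Filter

theorem trace_form_diagonal
    (E : (ℕ → NNReal) → ENNReal)
    (hperm : ∀ (σ : ℕ ≃ ℕ) (x : ℕ → NNReal), E (x ∘ σ) = E x)
    (hadd : ∀ x y : ℕ → NNReal, (∀ n, x n = 0 ∨ y n = 0) → E (x + y) = E x + E y)
    (hzero : E 0 = 0)
    (hmono : ∀ (x : ℕ → ℕ → NNReal) (xlim : ℕ → NNReal),
      (∀ n : ℕ, Monotone fun k => x k n) →
      (∀ n : ℕ, Tendsto (fun k => x k n) atTop (nhds (xlim n))) →
      Tendsto (fun k => E (x k)) atTop (nhds (E xlim))) :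
    (fun t : NNReal => E (fun n => if n = 0 then t else 0)) 0 = 0 ∧
    ∀ x : ℕ → NNReal,
      E x = ∑' n : ℕ, (fun t : NNReal => E (fun m => if m = 0 then t else 0)) (x n) := by
  set h : NNReal → ENNReal := fun t : NNReal => E (fun m => if m = 0 then t else 0) with hh
  have h0 : h 0 = 0 := by
    have : (fun m : ℕ => if m = 0 then (0 : NNReal) else 0) = 0 := by
      funext m; simp
    simp only [hh, this, hzero]
  refine ⟨h0, ?_⟩
  -- E of a delta at any index equals h
  have hdelta : ∀ (n : ℕ) (t : NNReal),
      E (fun m => if m = n then t else 0) = h t := by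
    intro n t
    have := hperm (Equiv.swap 0 n) (fun m => if m = 0 then t else 0)
    show E (fun m => if m = n then t else 0) = E fun m => if m = 0 then t else 0
    rw [← this]
    congr 1
    funext m
    simp only [Function.comp]
    by_cases hm : m = n
    · subst hm; simp [Equiv.swap_apply_right]
    · by_cases hm0 : m = 0
      · subst hm0
        rcases eq_or_ne n 0 with h' | h'
        · simp [h']
        · simp [Equiv.swap_apply_left, h', hm]
      · rw [Equiv.swap_apply_of_ne_of_ne hm0 hm]
        simp [hm0, hm]
  intro x
  -- truncations
  set T : ℕ → ℕ → NNReal := fun k n => if n < k then x n else 0 with hT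
  have hpartial : ∀ k, E (T k) = ∑ n ∈ Finset.range k, h (x n) := by
    intro k
    induction k with
    | zero =>
      have : T 0 = 0 := by funext n; simp [hT]
      simp [this, hzero]
    | succ k ih =>
      have hsplit : T (k + 1) = T k + (fun m => if m = k then x k else 0) := by
        funext n
        simp only [hT, Pi.add_apply]
        rcases lt_trichotomy n k with h' | h' | h'
        · simp [h', Nat.lt_succ_of_lt h', h'.ne]
        · subst h'; simp
        · simp [Nat.le_of_lt h', not_lt.mpr (Nat.le_of_lt h'), h'.ne',
            not_lt.mpr (Nat.succ_le_of_lt h')]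
      have hdisj : ∀ n, T k n = 0 ∨ (fun m => if m = k then x k else 0) n = 0 := by
        intro n
        by_cases hn : n = k
        · left; simp [hT, hn]
        · right; simp [hn]
      rw [hsplit, hadd _ _ hdisj, ih, hdelta, Finset.sum_range_succ]
  have hmonoT : ∀ n : ℕ, Monotone fun k => T k n := by
    intro n k l hkl
    simp only [hT]
    by_cases hn : n < k
    · simp [hn, lt_of_lt_of_le hn hkl]
    · simp [hn]
  have htendT : ∀ n : ℕ, Tendsto (fun k => T k n) atTop (nhds (x n)) := by
    intro n
    refine tendsto_nhds_of_eventually_eq ?_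
    filter_upwards [eventually_ge_atTop (n + 1)] with k hk
    simp [hT, Nat.lt_of_succ_le hk]
  have h1 : Tendsto (fun k => E (T k)) atTop (nhds (E x)) := hmono T x hmonoT htendT
  have h2 : Tendsto (fun k => E (T k)) atTop (nhds (∑' n, h (x n))) := by
    have := ENNReal.tendsto_nat_tsum (fun n => h (x n))
    simpa only [hpartial] using this
  exact tendsto_nhds_unique h1 h2
end

section
/- Fix a finite type n with decidable equality. Let E : Matrix n n ℂ → ℝ satisfy: (i) unitary invariance: for every U in the unitary group Matrix.unitaryGroup n ℂ and every Hermitian X one has E(U⋆ * X * U) = E(X); (ii) orthogonal additivity: for all Hermitian X, Y : Matrix n n ℂ with X * Y = 0 one has E(X + Y) = E(X) + E(Y). Then there exists a function h : ℝ → ℝ with h(0) = 0 such that for every X : Matrix n n ℂ with hX : X.IsHermitian, E(X) = ∑ i, h(hX.eigenvalues i), where hX.eigenvalues : n → ℝ are the eigenvalues of X counted with multiplicity. -/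
/-! Conjugating by an eigenvector unitary reduces `E` to `F d = E (diagonal d)` on real vectors `d`.
Conjugation by permutation matrices makes `F` symmetric in the coordinates, and orthogonal
additivity makes it additive on vectors of disjoint support, so `F d = ∑ i, F (d i • eᵢ)`;
by symmetry `F (t • eᵢ)` does not depend on `i`, which defines the profile `h`. -/

open Matrix

/-- Orthogonal additivity restricted to diagonal matrices: `d * e = 0` means disjoint supports. -/
def OrthogonallyAdditive {ι R M : Type*} [MulZeroClass R] [Add R] [Add M]
    (F : (ι → R) → M) : Prop :=
  ∀ d e : ι → R, d * e = 0 → F (d + e) = F d + F e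

namespace OrthogonallyAdditive

variable {ι R M : Type*} [NonUnitalNonAssocSemiring R] [AddCancelCommMonoid M] {F : (ι → R) → M}

theorem map_zero (hF : OrthogonallyAdditive F) : F 0 = 0 := by
  simpa using hF 0 0 (mul_zero 0)

theorem eq_sum_single [Fintype ι] [DecidableEq ι] (hF : OrthogonallyAdditive F) (d : ι → R) :
    F d = ∑ i, F (Pi.single i (d i)) := by
  suffices ∀ s : Finset ι, F (∑ i ∈ s, Pi.single i (d i)) = ∑ i ∈ s, F (Pi.single i (d i)) by
    simpa only [Finset.univ_sum_single] using this Finset.univ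
  intro s
  induction s using Finset.induction with
  | empty => simpa using hF.map_zero
  | insert j s hj ih =>
    have hdisj : Pi.single j (d j) * ∑ i ∈ s, Pi.single i (d i) = 0 := by
      rw [← Pi.single_mul_left]
      simp [Finset.sum_apply, Pi.single_apply, hj]
    rw [Finset.sum_insert hj, Finset.sum_insert hj, hF _ _ hdisj, ih]

theorem exists_eq_sum_of_comp_perm [Fintype ι] [DecidableEq ι] (hF : OrthogonallyAdditive F)
    (hperm : ∀ (σ : Equiv.Perm ι) (d : ι → R), F (d ∘ σ) = F d) :
    ∃ h : R → M, h 0 = 0 ∧ ∀ d, F d = ∑ i, h (d i) := by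
  rcases isEmpty_or_nonempty ι with hι | ⟨⟨i₀⟩⟩
  · exact ⟨0, rfl, fun d => by simpa [Subsingleton.elim d 0] using hF.map_zero⟩
  · refine ⟨fun t => F (Pi.single i₀ t), by simpa using hF.map_zero, fun d => ?_⟩
    have hsingle (i : ι) (t : R) : F (Pi.single i t) = F (Pi.single i₀ t) := by
      rw [← hperm (Equiv.swap i i₀), Pi.single_comp_equiv, Equiv.symm_swap, Equiv.swap_apply_left]
    rw [hF.eq_sum_single d]
    simp only [hsingle]

end OrthogonallyAdditive

namespace Equiv.Perm

variable {n R : Type*} [Fintype n] [DecidableEq n] [CommRing R] [StarRing R]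

theorem permMatrix_mem_unitaryGroup (σ : Equiv.Perm n) : σ.permMatrix R ∈ unitaryGroup n R := by
  rw [mem_unitaryGroup_iff', star_eq_conjTranspose, conjTranspose_permMatrix, ← permMatrix_mul,
    mul_inv_cancel, permMatrix_one]

theorem star_permMatrix_mul_mul_permMatrix (σ : Equiv.Perm n) (A : Matrix n n R) :
    star (σ.permMatrix R) * A * σ.permMatrix R = A.submatrix σ.symm σ.symm := by
  rw [star_eq_conjTranspose, conjTranspose_permMatrix, PEquiv.toMatrix_toPEquiv_mul,
    PEquiv.mul_toMatrix_toPEquiv]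
  rfl

end Equiv.Perm

theorem Matrix.isHermitian_diagonal_ofReal {n 𝕜 : Type*} [DecidableEq n] [RCLike 𝕜] (d : n → ℝ) :
    (diagonal (RCLike.ofReal ∘ d : n → 𝕜)).IsHermitian :=
  isHermitian_diagonal_of_self_adjoint _ (by ext; simp)

theorem Matrix.IsHermitian.apply_eq_apply_diagonal_eigenvalues {n 𝕜 α : Type*} [Fintype n]
    [DecidableEq n] [RCLike 𝕜] {f : Matrix n n 𝕜 → α}
    (hf : ∀ U ∈ unitaryGroup n 𝕜, ∀ X : Matrix n n 𝕜, X.IsHermitian → f (star U * X * U) = f X)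
    {X : Matrix n n 𝕜} (hX : X.IsHermitian) :
    f X = f (diagonal (RCLike.ofReal ∘ hX.eigenvalues)) := by
  rw [← hX.conjStarAlgAut_star_eigenvectorUnitary, Unitary.conjStarAlgAut_star_apply,
    hf _ hX.eigenvectorUnitary.2 X hX]

theorem trace_form_finite_dim
    {n : Type*} [Fintype n] [DecidableEq n]
    (E : Matrix n n ℂ → ℝ)
    (hunitary : ∀ U ∈ Matrix.unitaryGroup n ℂ, ∀ X : Matrix n n ℂ,
      X.IsHermitian → E (star U * X * U) = E X)
    (horth : ∀ X Y : Matrix n n ℂ,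
      X.IsHermitian → Y.IsHermitian → X * Y = 0 → E (X + Y) = E X + E Y) :
    ∃ h : ℝ → ℝ, h 0 = 0 ∧
      ∀ (X : Matrix n n ℂ) (hX : X.IsHermitian),
        E X = ∑ i, h (hX.eigenvalues i) := by
  set F : (n → ℝ) → ℝ := fun d => E (diagonal (RCLike.ofReal ∘ d))
  have hF_perm (σ : Equiv.Perm n) (d : n → ℝ) : F (d ∘ σ) = F d := by
    have := hunitary _ (Equiv.Perm.permMatrix_mem_unitaryGroup σ.symm) _
      (isHermitian_diagonal_ofReal d)
    rwa [Equiv.Perm.star_permMatrix_mul_mul_permMatrix, Equiv.symm_symm,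
      submatrix_diagonal_equiv] at this
  have hF_add : OrthogonallyAdditive F := fun d e hde => by
    have hsum : diagonal (RCLike.ofReal ∘ (d + e)) =
        diagonal (RCLike.ofReal ∘ d) + (diagonal (RCLike.ofReal ∘ e) : Matrix n n ℂ) := by
      rw [diagonal_add]
      congr 1
      ext i
      simp
    have hdisj :
        diagonal (RCLike.ofReal ∘ d) * (diagonal (RCLike.ofReal ∘ e) : Matrix n n ℂ) = 0 := by
      rw [diagonal_mul_diagonal, ← diagonal_zero]
      congr 1
      ext i
      simpa using congrFun hde i
    exact (congrArg E hsum).trans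
      (horth _ _ (isHermitian_diagonal_ofReal d) (isHermitian_diagonal_ofReal e) hdisj)
  obtain ⟨h, h0, hF⟩ := hF_add.exists_eq_sum_of_comp_perm hF_perm
  exact ⟨h, h0, fun X hX => (hX.apply_eq_apply_diagonal_eigenvalues hunitary).trans (hF _)⟩
end

section
/- Let λ : ℕ → ℝ with 0 ≤ λ n for all n, assume {n : ℕ | λ n ≤ Λ} is finite for every Λ : ℝ, and assume there are constants C > 0 and d > 0 with (Nat.card {n | λ n ≤ Λ} : ℝ) ≤ C * Λ ^ d for all Λ ≥ 1. Let f : ℝ → ℝ be continuous and monotone (nondecreasing) with Tendsto f atTop atTop, and regularly varying of index ρ > 0 at infinity, i.e. for every c > 0, Tendsto (fun t => f (c * t) / f t) atTop (nhds (c ^ ρ)). Then for every ε > 0 there exist C' > 0 and Λ₀ : ℝ such that for all Λ ≥ Λ₀ the set {n | f (λ n) ≤ Λ} is finite and (Nat.card {n | f (λ n) ≤ Λ} : ℝ) ≤ C' * Λ ^ (d / ρ + ε). Powers denote Real.rpow. -/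
/-!
Regular variation of index `ρ` forces `f (2t) ≥ 2^β f t` for large `t` whenever `β < ρ`, and
iterating this doubling inequality gives `f t ≥ c t^β`, hence `f t > t^α` for large `t` whenever
`0 < α < ρ`. Then `f (λ n) ≤ Λ` implies `λ n ≤ Λ^(1/α)`, so the counting function of `f ∘ λ` is
at most `C Λ^(d/α)`; take `α = d / (d/ρ + ε)`.
-/

open Filter

theorem Monotone.const_mul_rpow_le_of_rpow_mul_le {f : ℝ → ℝ} (hf : Monotone f)
    {a β c t₁ : ℝ} (ha : 1 < a) (hβ : 0 ≤ β) (ht₁ : 0 < t₁) (hc : 0 ≤ c)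
    (hbase : c * (a * t₁) ^ β ≤ f t₁) (hstep : ∀ t, t₁ ≤ t → a ^ β * f t ≤ f (a * t)) :
    ∀ t, t₁ ≤ t → c * t ^ β ≤ f t := by
  have ha₀ : 0 < a := by linarith
  have hnear : ∀ t, t₁ ≤ t → t ≤ a * t₁ → c * t ^ β ≤ f t := fun t h₁ h₂ =>
    calc c * t ^ β ≤ c * (a * t₁) ^ β := by gcongr; linarith
      _ ≤ f t₁ := hbase
      _ ≤ f t := hf h₁
  have hdyadic : ∀ n : ℕ, ∀ t, t₁ ≤ t → t ≤ a ^ n * t₁ → c * t ^ β ≤ f t := by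
    intro n
    induction n with
    | zero => exact fun t h₁ h₂ => hnear t h₁ (by nlinarith)
    | succ n ih =>
      intro t h₁ h₂
      rcases le_or_gt t (a * t₁) with hle | hgt
      · exact hnear t h₁ hle
      have hs₁ : t₁ ≤ t / a := by rw [le_div_iff₀ ha₀]; linarith
      have hs₂ : t / a ≤ a ^ n * t₁ := by
        rw [div_le_iff₀ ha₀, mul_right_comm, ← pow_succ]; exact h₂
      have hts : t = a * (t / a) := by field_simp
      calc c * t ^ β = a ^ β * (c * (t / a) ^ β) := by
            rw [hts, Real.mul_rpow ha₀.le (by linarith), ← hts]; ring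
        _ ≤ a ^ β * f (t / a) := by gcongr; exact ih _ hs₁ hs₂
        _ ≤ f (a * (t / a)) := hstep _ hs₁
        _ = f t := by rw [← hts]
  intro t ht
  obtain ⟨n, hn⟩ := pow_unbounded_of_one_lt (t / t₁) ha
  exact hdyadic n t ht ((div_lt_iff₀ ht₁).mp hn).le

theorem eventually_const_mul_rpow_le_of_tendsto_div {f : ℝ → ℝ} (hf : Monotone f)
    (hftop : Tendsto f atTop atTop) {a ρ β : ℝ} (ha : 1 < a) (hβ : 0 ≤ β) (hβρ : β < ρ)
    (hreg : Tendsto (fun t => f (a * t) / f t) atTop (nhds (a ^ ρ))) :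
    ∃ c, 0 < c ∧ ∀ᶠ t in atTop, c * t ^ β ≤ f t := by
  have hratio : ∀ᶠ t in atTop, a ^ β < f (a * t) / f t :=
    hreg.eventually (eventually_gt_nhds (Real.rpow_lt_rpow_of_exponent_lt ha hβρ))
  obtain ⟨t₁, ht₁⟩ := eventually_atTop.mp
    (hratio.and ((hftop.eventually_gt_atTop 0).and (eventually_gt_atTop 0)))
  have ht₁pos : 0 < t₁ := (ht₁ t₁ le_rfl).2.2
  have hstep : ∀ t, t₁ ≤ t → a ^ β * f t ≤ f (a * t) := fun t ht =>
    ((lt_div_iff₀ (ht₁ t ht).2.1).mp (ht₁ t ht).1).le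
  have hpow : 0 < (a * t₁) ^ β := by positivity
  refine ⟨f t₁ / (a * t₁) ^ β, div_pos (ht₁ t₁ le_rfl).2.1 hpow, eventually_atTop.mpr ⟨t₁, ?_⟩⟩
  exact hf.const_mul_rpow_le_of_rpow_mul_le ha hβ ht₁pos (div_nonneg (ht₁ t₁ le_rfl).2.1.le hpow.le)
    (div_mul_cancel₀ _ hpow.ne').le hstep

theorem eventually_rpow_lt_of_tendsto_div {f : ℝ → ℝ} (hf : Monotone f)
    (hftop : Tendsto f atTop atTop) {a ρ α : ℝ} (ha : 1 < a) (hα : 0 < α) (hαρ : α < ρ)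
    (hreg : Tendsto (fun t => f (a * t) / f t) atTop (nhds (a ^ ρ))) :
    ∀ᶠ t in atTop, t ^ α < f t := by
  obtain ⟨β, hαβ, hβρ⟩ := exists_between hαρ
  obtain ⟨c, hc, hcf⟩ :=
    eventually_const_mul_rpow_le_of_tendsto_div hf hftop ha (hα.trans hαβ).le hβρ hreg
  filter_upwards [hcf, eventually_gt_atTop 0,
    (tendsto_rpow_atTop (sub_pos.mpr hαβ)).eventually_gt_atTop c⁻¹] with t hft ht hgap
  calc t ^ α < c * t ^ (β - α) * t ^ α := by
        rw [inv_lt_iff_one_lt_mul₀' hc] at hgap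
        exact lt_mul_of_one_lt_left (by positivity) hgap
    _ = c * t ^ β := by rw [mul_assoc, ← Real.rpow_add ht, sub_add_cancel]
    _ ≤ f t := hft

theorem eventually_card_comp_le {l : ℕ → ℝ} (hfin : ∀ Λ : ℝ, {n : ℕ | l n ≤ Λ}.Finite)
    {C d : ℝ} (hbound : ∀ Λ : ℝ, 1 ≤ Λ → (Nat.card {n : ℕ | l n ≤ Λ} : ℝ) ≤ C * Λ ^ d)
    {f : ℝ → ℝ} (hf : Monotone f) {α : ℝ} (hα : 0 < α) (hlow : ∀ᶠ t in atTop, t ^ α < f t) :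
    ∀ᶠ Λ in atTop, {n : ℕ | f (l n) ≤ Λ}.Finite ∧
      (Nat.card {n : ℕ | f (l n) ≤ Λ} : ℝ) ≤ C * Λ ^ (d / α) := by
  have hroot : Tendsto (fun Λ : ℝ => Λ ^ α⁻¹) atTop atTop := tendsto_rpow_atTop (inv_pos.mpr hα)
  filter_upwards [hroot.eventually hlow, hroot.eventually_ge_atTop 1, eventually_ge_atTop 0]
    with Λ hΛ hT hΛ₀
  rw [Real.rpow_inv_rpow hΛ₀ hα.ne'] at hΛ
  have hsub : {n : ℕ | f (l n) ≤ Λ} ⊆ {n : ℕ | l n ≤ Λ ^ α⁻¹} := fun n hn =>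
    (hf.reflect_lt (lt_of_le_of_lt hn hΛ)).le
  refine ⟨(hfin _).subset hsub, ?_⟩
  calc (Nat.card {n : ℕ | f (l n) ≤ Λ} : ℝ) ≤ Nat.card {n : ℕ | l n ≤ Λ ^ α⁻¹} := by
        exact_mod_cast Nat.card_mono (hfin _) hsub
    _ ≤ C * (Λ ^ α⁻¹) ^ d := hbound _ hT
    _ = C * Λ ^ (d / α) := by rw [← Real.rpow_mul hΛ₀, inv_mul_eq_div]

theorem growth_regularly_varying_transform_general
    (l : ℕ → ℝ)
    (hfin : ∀ Λ : ℝ, {n : ℕ | l n ≤ Λ}.Finite)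
    (C d : ℝ) (hC : 0 < C) (hd : 0 < d)
    (hbound : ∀ Λ : ℝ, 1 ≤ Λ → (Nat.card {n : ℕ | l n ≤ Λ} : ℝ) ≤ C * Λ ^ d)
    (f : ℝ → ℝ) (hfmono : Monotone f)
    (hftop : Tendsto f atTop atTop)
    (ρ : ℝ) (hρ : 0 < ρ)
    (hreg : ∀ c : ℝ, 0 < c →
      Tendsto (fun t : ℝ => f (c * t) / f t) atTop (nhds (c ^ ρ))) :
    ∀ ε : ℝ, 0 < ε → ∃ C' : ℝ, 0 < C' ∧ ∃ Λ₀ : ℝ, ∀ Λ : ℝ, Λ₀ ≤ Λ →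
      {n : ℕ | f (l n) ≤ Λ}.Finite ∧
      (Nat.card {n : ℕ | f (l n) ≤ Λ} : ℝ) ≤ C' * Λ ^ (d / ρ + ε) := by
  intro ε hε
  set α := d / (d / ρ + ε)
  have hsum : 0 < d / ρ + ε := by positivity
  have hα : 0 < α := by positivity
  have hαρ : α < ρ := by
    rw [div_lt_iff₀ hsum, mul_add, mul_div_cancel₀ d hρ.ne']
    linarith [mul_pos hρ hε]
  have hdα : d / α = d / ρ + ε := by rw [div_div_cancel₀ hd.ne']
  have hlow := eventually_rpow_lt_of_tendsto_div hfmono hftop one_lt_two hα hαρ (hreg 2 two_pos)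
  obtain ⟨Λ₀, hΛ₀⟩ := eventually_atTop.mp (eventually_card_comp_le hfin hbound hfmono hα hlow)
  exact ⟨C, hC, Λ₀, fun Λ hΛ => hdα ▸ hΛ₀ Λ hΛ⟩

theorem growth_regularly_varying_transform
    (l : ℕ → ℝ) (hnonneg : ∀ n, 0 ≤ l n)
    (hfin : ∀ Λ : ℝ, {n : ℕ | l n ≤ Λ}.Finite)
    (C d : ℝ) (hC : 0 < C) (hd : 0 < d)
    (hbound : ∀ Λ : ℝ, 1 ≤ Λ → (Nat.card {n : ℕ | l n ≤ Λ} : ℝ) ≤ C * Λ ^ d)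
    (f : ℝ → ℝ) (hfcont : Continuous f) (hfmono : Monotone f)
    (hftop : Tendsto f atTop atTop)
    (ρ : ℝ) (hρ : 0 < ρ)
    (hreg : ∀ c : ℝ, 0 < c →
      Tendsto (fun t : ℝ => f (c * t) / f t) atTop (nhds (c ^ ρ))) :
    ∀ ε : ℝ, 0 < ε → ∃ C' : ℝ, 0 < C' ∧ ∃ Λ₀ : ℝ, ∀ Λ : ℝ, Λ₀ ≤ Λ →
      {n : ℕ | f (l n) ≤ Λ}.Finite ∧
      (Nat.card {n : ℕ | f (l n) ≤ Λ} : ℝ) ≤ C' * Λ ^ (d / ρ + ε) :=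
  growth_regularly_varying_transform_general l hfin C d hC hd hbound f hfmono hftop ρ hρ hreg
end

section
/- Let a, b : ℕ → ℝ with a m > 0 and b n > 0 for all m, n, and assume that for every t : ℝ the sets {m | a m ≤ t} and {n | b n ≤ t} are finite. Let d_D ≥ 0 and d_E ≥ 0 be real constants and assume: for every ε > 0 there exist C > 0 and t₀ ≥ 1 such that for all t ≥ t₀, (Nat.card {m | a m ≤ t} : ℝ) ≤ C * t ^ (d_D + ε) and (Nat.card {n | b n ≤ t} : ℝ) ≤ C * t ^ (d_E + ε). Then for every ε > 0 there exist C' > 0 and Λ₀ ≥ 1 such that for all Λ ≥ Λ₀ the set {p : ℕ × ℕ | a p.1 * b p.2 ≤ Λ} is finite and (Nat.card {p : ℕ × ℕ | a p.1 * b p.2 ≤ Λ} : ℝ) ≤ C' * Λ ^ (d_D + d_E + ε). Powers denote Real.rpow. -/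
lemma exists_pos_lb (a : ℕ → ℝ) (ha : ∀ m, 0 < a m)
    (h : {m : ℕ | a m ≤ 1}.Finite) : ∃ δ : ℝ, 0 < δ ∧ δ ≤ 1 ∧ ∀ m, δ ≤ a m := by
  classical
  set s : Finset ℝ := insert 1 (h.toFinset.image a) with hs
  have hne : s.Nonempty := ⟨1, Finset.mem_insert_self _ _⟩
  refine ⟨s.min' hne, ?_, ?_, ?_⟩
  · have : ∀ x ∈ s, 0 < x := by
      intro x hx
      rcases Finset.mem_insert.1 hx with rfl | hx
      · norm_num
      · rcases Finset.mem_image.1 hx with ⟨m, _, rfl⟩; exact ha m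
    exact this _ (s.min'_mem hne)
  · exact s.min'_le 1 (Finset.mem_insert_self _ _)
  · intro m
    by_cases hm : a m ≤ 1
    · refine s.min'_le (a m) ?_
      exact Finset.mem_insert_of_mem (Finset.mem_image_of_mem a (h.mem_toFinset.2 hm))
    · exact le_trans (s.min'_le 1 (Finset.mem_insert_self _ _)) (le_of_not_ge hm)

theorem tensor_product_polynomial_growth
    (a b : ℕ → ℝ) (ha : ∀ m, 0 < a m) (hb : ∀ n, 0 < b n)
    (hafin : ∀ t : ℝ, {m : ℕ | a m ≤ t}.Finite)
    (hbfin : ∀ t : ℝ, {n : ℕ | b n ≤ t}.Finite)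
    (dD dE : ℝ) (hdD : 0 ≤ dD) (hdE : 0 ≤ dE)
    (hbound : ∀ ε : ℝ, 0 < ε → ∃ C : ℝ, 0 < C ∧ ∃ t₀ : ℝ, 1 ≤ t₀ ∧
      ∀ t : ℝ, t₀ ≤ t →
        (Nat.card {m : ℕ | a m ≤ t} : ℝ) ≤ C * t ^ (dD + ε) ∧
        (Nat.card {n : ℕ | b n ≤ t} : ℝ) ≤ C * t ^ (dE + ε)) :
    ∀ ε : ℝ, 0 < ε → ∃ C' : ℝ, 0 < C' ∧ ∃ Λ₀ : ℝ, 1 ≤ Λ₀ ∧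
      ∀ Λ : ℝ, Λ₀ ≤ Λ →
        {p : ℕ × ℕ | a p.1 * b p.2 ≤ Λ}.Finite ∧
        (Nat.card {p : ℕ × ℕ | a p.1 * b p.2 ≤ Λ} : ℝ) ≤ C' * Λ ^ (dD + dE + ε) := by
  intro ε hε
  obtain ⟨δa, hδa, hδa1, hla⟩ := exists_pos_lb a ha (hafin 1)
  obtain ⟨δb, hδb, hδb1, hlb⟩ := exists_pos_lb b hb (hbfin 1)
  set δ : ℝ := min δa δb with hδdef
  have hδ : 0 < δ := lt_min hδa hδb
  have hδ1 : δ ≤ 1 := le_trans (min_le_left _ _) hδa1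
  have hla' : ∀ m, δ ≤ a m := fun m => le_trans (min_le_left _ _) (hla m)
  have hlb' : ∀ n, δ ≤ b n := fun n => le_trans (min_le_right _ _) (hlb n)
  obtain ⟨C, hC, t₀, ht₀, hbd⟩ := hbound (ε / 2) (by linarith)
  refine ⟨C * C * (1 / δ) ^ (dD + dE + ε), by positivity, t₀, ht₀, ?_⟩
  intro Λ hΛ
  have hΛ1 : (1 : ℝ) ≤ Λ := le_trans ht₀ hΛ
  have hΛpos : 0 < Λ := lt_of_lt_of_le one_pos hΛ1
  have hT : t₀ ≤ Λ / δ := by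
    rw [le_div_iff₀ hδ]
    calc t₀ * δ ≤ t₀ * 1 := by nlinarith
    _ = t₀ := mul_one _
    _ ≤ Λ := hΛ
  -- subset of product
  have hsub : {p : ℕ × ℕ | a p.1 * b p.2 ≤ Λ} ⊆
      {m : ℕ | a m ≤ Λ / δ} ×ˢ {n : ℕ | b n ≤ Λ / δ} := by
    rintro ⟨m, n⟩ hp
    simp only [Set.mem_setOf_eq] at hp
    constructor
    · show a m ≤ Λ / δ
      rw [le_div_iff₀ hδ]
      calc a m * δ ≤ a m * b n := by
            have := hlb' n; nlinarith [(ha m).le]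
        _ ≤ Λ := hp
    · show b n ≤ Λ / δ
      rw [le_div_iff₀ hδ]
      calc b n * δ ≤ a m * b n := by
            have := hla' m; nlinarith [(hb n).le]
        _ ≤ Λ := hp
  have hfinprod : ({m : ℕ | a m ≤ Λ / δ} ×ˢ {n : ℕ | b n ≤ Λ / δ}).Finite :=
    (hafin _).prod (hbfin _)
  have hfin : {p : ℕ × ℕ | a p.1 * b p.2 ≤ Λ}.Finite := hfinprod.subset hsub
  refine ⟨hfin, ?_⟩
  have hcard1 : Nat.card {p : ℕ × ℕ | a p.1 * b p.2 ≤ Λ} ≤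
      Nat.card {m : ℕ | a m ≤ Λ / δ} * Nat.card {n : ℕ | b n ≤ Λ / δ} := by
    calc Nat.card {p : ℕ × ℕ | a p.1 * b p.2 ≤ Λ}
        ≤ Nat.card ({m : ℕ | a m ≤ Λ / δ} ×ˢ {n : ℕ | b n ≤ Λ / δ}) :=
          Nat.card_mono hfinprod hsub
      _ = _ := by
          rw [Nat.card_congr (Equiv.Set.prod _ _), Nat.card_prod]
  obtain ⟨hA, hB⟩ := hbd (Λ / δ) hT
  have hTpos : 0 < Λ / δ := div_pos hΛpos hδ
  have key : (Nat.card {p : ℕ × ℕ | a p.1 * b p.2 ≤ Λ} : ℝ) ≤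
      (C * (Λ / δ) ^ (dD + ε / 2)) * (C * (Λ / δ) ^ (dE + ε / 2)) := by
    calc (Nat.card {p : ℕ × ℕ | a p.1 * b p.2 ≤ Λ} : ℝ)
        ≤ (Nat.card {m : ℕ | a m ≤ Λ / δ} : ℝ) * (Nat.card {n : ℕ | b n ≤ Λ / δ} : ℝ) := by
          exact_mod_cast hcard1
      _ ≤ _ := by
          apply mul_le_mul hA hB (by positivity) (by positivity)
  calc (Nat.card {p : ℕ × ℕ | a p.1 * b p.2 ≤ Λ} : ℝ)
      ≤ (C * (Λ / δ) ^ (dD + ε / 2)) * (C * (Λ / δ) ^ (dE + ε / 2)) := key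
    _ = C * C * (Λ / δ) ^ (dD + dE + ε) := by
        rw [mul_mul_mul_comm, ← Real.rpow_add hTpos]; congr 1; ring
    _ = C * C * (1 / δ) ^ (dD + dE + ε) * Λ ^ (dD + dE + ε) := by
        rw [div_eq_mul_one_div Λ δ, Real.mul_rpow hΛpos.le (by positivity)]; ring
end

section
/- Let a, b : ℕ → ℝ with a m > 0 and b n > 0 for all m, n, and assume that for every t : ℝ the sets {m | a m ≤ t} and {n | b n ≤ t} are finite. Let C_D, C_E > 0, d_D ≥ 0, d_E ≥ 0 and δ ∈ (0,1) be real constants such that for all t ≥ 1, (Nat.card {m | a m ≤ t} : ℝ) ≤ C_D * t ^ (d_D + δ) and (Nat.card {n | b n ≤ t} : ℝ) ≤ C_E * t ^ (d_E + δ). Then there exists C'' > 0 such that for all Λ ≥ 1 the set {p : ℕ × ℕ | a p.1 * b p.2 ≤ Λ} is finite and (Nat.card {p : ℕ × ℕ | a p.1 * b p.2 ≤ Λ} : ℝ) ≤ C'' * Λ ^ (d_D + d_E + 2*δ). Powers denote Real.rpow. -/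
lemma exists_pos_lb_s11 (b : ℕ → ℝ) (hb : ∀ n, 0 < b n)
    (hfin : {n : ℕ | b n ≤ 1}.Finite) :
    ∃ β : ℝ, 0 < β ∧ β ≤ 1 ∧ ∀ n, β ≤ b n := by
  rcases hfin.toFinset.eq_empty_or_nonempty with h | h
  · refine ⟨1, one_pos, le_refl 1, fun n => ?_⟩
    by_contra hn
    have : n ∈ hfin.toFinset := by simp [le_of_not_ge hn]
    simp [h] at this
  · refine ⟨min 1 (hfin.toFinset.inf' h b), lt_min one_pos ?_, min_le_left _ _, fun n => ?_⟩
    · apply (Finset.lt_inf'_iff h).mpr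
      intro i _
      exact hb i
    · by_cases hn : b n ≤ 1
      · exact le_trans (min_le_right _ _)
          (Finset.inf'_le b (by simp [hn]))
      · exact le_trans (min_le_left _ _) (le_of_not_ge hn)

theorem tensor_product_counting_bound
    (a b : ℕ → ℝ) (ha : ∀ m, 0 < a m) (hb : ∀ n, 0 < b n)
    (hafin : ∀ t : ℝ, {m : ℕ | a m ≤ t}.Finite)
    (hbfin : ∀ t : ℝ, {n : ℕ | b n ≤ t}.Finite)
    (C_D C_E d_D d_E δ : ℝ) (hCD : 0 < C_D) (hCE : 0 < C_E)
    (hdD : 0 ≤ d_D) (hdE : 0 ≤ d_E) (hδ0 : 0 < δ) (hδ1 : δ < 1)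
    (haBound : ∀ t : ℝ, 1 ≤ t → (Nat.card {m : ℕ | a m ≤ t} : ℝ) ≤ C_D * t ^ (d_D + δ))
    (hbBound : ∀ t : ℝ, 1 ≤ t → (Nat.card {n : ℕ | b n ≤ t} : ℝ) ≤ C_E * t ^ (d_E + δ)) :
    ∃ C'' : ℝ, 0 < C'' ∧ ∀ Λ : ℝ, 1 ≤ Λ →
      {p : ℕ × ℕ | a p.1 * b p.2 ≤ Λ}.Finite ∧
      (Nat.card {p : ℕ × ℕ | a p.1 * b p.2 ≤ Λ} : ℝ) ≤ C'' * Λ ^ (d_D + d_E + 2 * δ) := by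
  obtain ⟨α, hα0, hα1, hαle⟩ := exists_pos_lb_s11 a ha (hafin 1)
  obtain ⟨β, hβ0, hβ1, hβle⟩ := exists_pos_lb_s11 b hb (hbfin 1)
  refine ⟨C_D * C_E * (β ^ (d_D + δ))⁻¹ * (α ^ (d_E + δ))⁻¹, ?_, fun Λ hΛ => ?_⟩
  · positivity
  have hΛ0 : (0:ℝ) < Λ := lt_of_lt_of_le one_pos hΛ
  have hsub : {p : ℕ × ℕ | a p.1 * b p.2 ≤ Λ} ⊆
      {m : ℕ | a m ≤ Λ / β} ×ˢ {n : ℕ | b n ≤ Λ / α} := by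
    rintro ⟨m, n⟩ hp
    simp only [Set.mem_setOf_eq] at hp
    constructor
    · show a m ≤ Λ / β
      rw [le_div_iff₀ hβ0]
      calc a m * β ≤ a m * b n := by
              exact mul_le_mul_of_nonneg_left (hβle n) (ha m).le
        _ ≤ Λ := hp
    · show b n ≤ Λ / α
      rw [le_div_iff₀ hα0]
      calc b n * α ≤ a m * b n := by
              rw [mul_comm]
              exact mul_le_mul_of_nonneg_right (hαle m) (hb n).le
        _ ≤ Λ := hp
  have hprodfin : ({m : ℕ | a m ≤ Λ / β} ×ˢ {n : ℕ | b n ≤ Λ / α}).Finite :=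
    (hafin _).prod (hbfin _)
  have hfin : {p : ℕ × ℕ | a p.1 * b p.2 ≤ Λ}.Finite := hprodfin.subset hsub
  refine ⟨hfin, ?_⟩
  have hcard1 : (Nat.card {p : ℕ × ℕ | a p.1 * b p.2 ≤ Λ} : ℝ) ≤
      (Nat.card ({m : ℕ | a m ≤ Λ / β} ×ˢ {n : ℕ | b n ≤ Λ / α}) : ℝ) := by
    exact_mod_cast Nat.card_mono hprodfin hsub
  have hcard2 : Nat.card ({m : ℕ | a m ≤ Λ / β} ×ˢ {n : ℕ | b n ≤ Λ / α} : Set (ℕ × ℕ)) =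
      Nat.card {m : ℕ | a m ≤ Λ / β} * Nat.card {n : ℕ | b n ≤ Λ / α} := by
    rw [Nat.card_congr (Equiv.Set.prod _ _), Nat.card_prod]
  have hΛβ : (1:ℝ) ≤ Λ / β := by
    rw [le_div_iff₀ hβ0]; nlinarith
  have hΛα : (1:ℝ) ≤ Λ / α := by
    rw [le_div_iff₀ hα0]; nlinarith
  have hA := haBound _ hΛβ
  have hB := hbBound _ hΛα
  have haC : (0:ℝ) ≤ (Nat.card {m : ℕ | a m ≤ Λ / β} : ℝ) := Nat.cast_nonneg _
  have hdiv1 : (Λ / β) ^ (d_D + δ) = Λ ^ (d_D + δ) * (β ^ (d_D + δ))⁻¹ := by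
    rw [Real.div_rpow hΛ0.le hβ0.le, div_eq_mul_inv]
  have hdiv2 : (Λ / α) ^ (d_E + δ) = Λ ^ (d_E + δ) * (α ^ (d_E + δ))⁻¹ := by
    rw [Real.div_rpow hΛ0.le hα0.le, div_eq_mul_inv]
  have hrpow : Λ ^ (d_D + δ) * Λ ^ (d_E + δ) = Λ ^ (d_D + d_E + 2 * δ) := by
    rw [← Real.rpow_add hΛ0]; ring_nf
  calc (Nat.card {p : ℕ × ℕ | a p.1 * b p.2 ≤ Λ} : ℝ)
      ≤ (Nat.card {m : ℕ | a m ≤ Λ / β} : ℝ) * (Nat.card {n : ℕ | b n ≤ Λ / α} : ℝ) := by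
        rw [hcard2] at hcard1; exact_mod_cast hcard1
    _ ≤ (C_D * (Λ / β) ^ (d_D + δ)) * (C_E * (Λ / α) ^ (d_E + δ)) := by
        apply mul_le_mul hA hB (Nat.cast_nonneg _)
        positivity
    _ = C_D * C_E * (β ^ (d_D + δ))⁻¹ * (α ^ (d_E + δ))⁻¹ * (Λ ^ (d_D + δ) * Λ ^ (d_E + δ)) := by
        rw [hdiv1, hdiv2]; ring
    _ = _ := by rw [hrpow]
end

section
/- Let H be a complex Hilbert space (an inner product space over ℂ that is complete). Let E : (H →L[ℂ] H) → ℝ≥0∞ satisfy: (i) unitary invariance: for every linear isometric equivalence U : H ≃ₗᵢ[ℂ] H and every T : H →L[ℂ] H, E((U.symm : H →L[ℂ] H) ∘L T ∘L (U : H →L[ℂ] H)) = E(T); (ii) orthogonal additivity: for all self-adjoint S, T : H →L[ℂ] H with S ∘L T = 0, E(S + T) = E(S) + E(T); (iii) E(0) = 0. Fix a unit vector e : H with ‖e‖ = 1, let P_e : H →L[ℂ] H be the orthogonal projection onto the line ℂ ∙ e, and define h : ℝ → ℝ≥0∞ by h(λ) = E(λ • P_e). Let m : ℕ, let K : Fin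 m → Submodule ℂ H be finite-dimensional subspaces that are pairwise orthogonal (for i ≠ j, every vector of K i is orthogonal to every vector of K j), let P j : H →L[ℂ] H be the orthogonal projection onto K j, and let λ : Fin m → ℝ. Then E(∑ j, λ j • P j) = ∑ j, (Module.finrank ℂ (K j)) • h(λ j), where ℕ acts on ℝ≥0∞ by repeated addition. -/
/-!
Orthogonal projections onto pairwise orthogonal subspaces have vanishing products, so orthogonal
additivity splits `E` over the summands; an orthonormal basis splits each finite-rank projection
further into rank-one projections onto unit vectors. Any unit vector is carried onto the line of
any other by a unitary (a Householder reflection, once the phase is adjusted), so by unitary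
invariance every rank-one summand contributes `h(λ)`.
-/

open ContinuousLinearMap InnerProductSpace
open scoped InnerProductSpace

namespace Submodule

variable {𝕜 E : Type*} [RCLike 𝕜] [NormedAddCommGroup E] [InnerProductSpace 𝕜 E]

theorem reflection_sub_of_inner_comm {v w : E} (h : ‖v‖ = ‖w‖) (hvw : ⟪v, w⟫_𝕜 = ⟪w, v⟫_𝕜) :
    reflection (𝕜 ∙ (v - w))ᗮ v = w := by
  set R : E ≃ₗᵢ[𝕜] E := reflection (𝕜 ∙ (v - w))ᗮ
  suffices R v + R v = w + w by
    apply smul_right_injective E (two_ne_zero : (2 : 𝕜) ≠ 0)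
    simpa [two_smul] using this
  have h₁ : R (v - w) = -(v - w) := reflection_orthogonalComplement_singleton_eq_neg (v - w)
  have h₂ : R (v + w) = v + w := by
    apply reflection_mem_subspace_eq_self
    rw [mem_orthogonal_singleton_iff_inner_left, inner_sub_right, inner_add_left, inner_add_left,
      inner_self_eq_norm_sq_to_K, inner_self_eq_norm_sq_to_K, h, hvw]
    ring
  convert congr_arg₂ (· + ·) h₂ h₁ using 1
  · simp
  · abel

theorem starProjection_span_singleton_eq_rankOne {v : E} (hv : ‖v‖ = 1) :
    (𝕜 ∙ v).starProjection = rankOne 𝕜 v v := by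
  ext x
  simp [starProjection_unit_singleton 𝕜 hv]

end Submodule

section

variable {𝕜 E : Type*} [RCLike 𝕜] [NormedAddCommGroup E] [InnerProductSpace 𝕜 E]

theorem LinearIsometryEquiv.exists_apply_eq_smul_of_norm_eq {u v : E} (h : ‖u‖ = ‖v‖) :
    ∃ (U : E ≃ₗᵢ[𝕜] E) (c : 𝕜), ‖c‖ = 1 ∧ U u = c • v := by
  -- the phase `c` makes `⟪u, c • v⟫` real, which is what the reflection needs
  obtain ⟨c, hc, hcuv⟩ := RCLike.exists_norm_eq_mul_self (⟪u, v⟫_𝕜)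
  refine ⟨Submodule.reflection (𝕜 ∙ (u - c • v))ᗮ, c, hc, ?_⟩
  refine Submodule.reflection_sub_of_inner_comm (by rw [norm_smul, hc, one_mul, h]) ?_
  rw [← inner_conj_symm (c • v) u, inner_smul_right, ← hcuv, RCLike.conj_ofReal]

theorem LinearIsometryEquiv.conj_rankOne (U : E ≃ₗᵢ[𝕜] E) (x y : E) :
    U.symm.toLinearIsometry.toContinuousLinearMap ∘L rankOne 𝕜 x y ∘L
      U.toLinearIsometry.toContinuousLinearMap = rankOne 𝕜 (U.symm x) (U.symm y) := by
  ext z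
  simp [LinearIsometryEquiv.inner_map_eq_flip]

theorem InnerProductSpace.rankOne_smul_self_of_norm_eq_one {c : 𝕜} (hc : ‖c‖ = 1) (x : E) :
    rankOne 𝕜 (c • x) (c • x) = rankOne 𝕜 x x := by
  simp [smul_smul, RCLike.mul_conj, hc]

end

section OrthogonallyAdditive

variable {A M : Type*}

def IsOrthogonallyAdditive [Mul A] [Add A] [Star A] [Zero A] [Add M] (E : A → M) : Prop :=
  ∀ S T : A, IsSelfAdjoint S → IsSelfAdjoint T → S * T = 0 → E (S + T) = E S + E T

theorem IsOrthogonallyAdditive.map_sum [NonUnitalNonAssocSemiring A] [StarAddMonoid A]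
    [AddCommMonoid M] {E : A → M} (hE : IsOrthogonallyAdditive E) (h0 : E 0 = 0)
    {ι : Type*} (s : Finset ι) (T : ι → A) (hsa : ∀ i ∈ s, IsSelfAdjoint (T i))
    (hT : (s : Set ι).Pairwise fun i j ↦ T i * T j = 0) :
    E (∑ i ∈ s, T i) = ∑ i ∈ s, E (T i) := by
  classical
  induction s using Finset.induction_on with
  | empty => simpa using h0
  | insert a s ha ih =>
    rw [Finset.coe_insert, Set.pairwise_insert] at hT
    rw [Finset.forall_mem_insert] at hsa
    have hrest : IsSelfAdjoint (∑ i ∈ s, T i) := isSelfAdjoint_sum s hsa.2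
    have hprod : T a * ∑ i ∈ s, T i = 0 := by
      rw [Finset.mul_sum]
      exact Finset.sum_eq_zero fun i hi ↦ (hT.2 i hi (ne_of_mem_of_not_mem hi ha).symm).1
    rw [Finset.sum_insert ha, Finset.sum_insert ha, hE _ _ hsa.1 hrest hprod, ih hsa.2 hT.1]

end OrthogonallyAdditive

section UnitarilyInvariant

variable {𝕜 H M : Type*} [RCLike 𝕜] [NormedAddCommGroup H] [InnerProductSpace 𝕜 H]

def IsUnitarilyInvariant (E : (H →L[𝕜] H) → M) : Prop :=
  ∀ (U : H ≃ₗᵢ[𝕜] H) (T : H →L[𝕜] H),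
    E (U.symm.toLinearIsometry.toContinuousLinearMap ∘L T ∘L
      U.toLinearIsometry.toContinuousLinearMap) = E T

theorem IsUnitarilyInvariant.apply_smul_rankOne_eq {E : (H →L[𝕜] H) → M}
    (hE : IsUnitarilyInvariant E) {u v : H} (hu : ‖u‖ = 1) (hv : ‖v‖ = 1) (a : 𝕜) :
    E (a • rankOne 𝕜 u u) = E (a • rankOne 𝕜 v v) := by
  obtain ⟨U, c, hc, hUv⟩ :=
    LinearIsometryEquiv.exists_apply_eq_smul_of_norm_eq (𝕜 := 𝕜) (hv.trans hu.symm)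
  have := hE U.symm (a • rankOne 𝕜 v v)
  rwa [smul_comp, comp_smul, U.symm.conj_rankOne, LinearIsometryEquiv.symm_symm, hUv,
    rankOne_smul_self_of_norm_eq_one hc] at this

theorem IsUnitarilyInvariant.apply_smul_starProjection [CompleteSpace H] [AddCommMonoid M]
    {E : (H →L[𝕜] H) → M} (hU : IsUnitarilyInvariant E) (hA : IsOrthogonallyAdditive E)
    (h0 : E 0 = 0) {e : H} (he : ‖e‖ = 1) (K : Submodule 𝕜 H) [FiniteDimensional 𝕜 K] (r : ℝ) :
    E ((r : 𝕜) • K.starProjection) =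
      Module.finrank 𝕜 K • E ((r : 𝕜) • (𝕜 ∙ e).starProjection) := by
  set b := stdOrthonormalBasis 𝕜 K
  have hb_norm : ∀ i, ‖(b i : H)‖ = 1 := fun i ↦ b.orthonormal.1 i
  have hb_orth : ∀ i j, i ≠ j → ⟪(b i : H), b j⟫_𝕜 = 0 := fun _ _ hij ↦ b.orthonormal.2 hij
  rw [b.starProjection_eq_sum_rankOne, Finset.smul_sum, hA.map_sum h0,
    Finset.sum_congr rfl fun i _ ↦ hU.apply_smul_rankOne_eq (hb_norm i) he _,
    Finset.sum_const, Finset.card_univ, Fintype.card_fin,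
    Submodule.starProjection_span_singleton_eq_rankOne he]
  · exact fun i _ ↦ IsSelfAdjoint.smul (RCLike.conj_ofReal r)
      (isStarProjection_rankOne_self (hb_norm i)).isSelfAdjoint
  · intro i _ j _ hij
    simp [mul_def, rankOne_comp_rankOne, hb_orth i j hij]

end UnitarilyInvariant

theorem finite_rank_evaluation
    {H : Type*} [NormedAddCommGroup H] [InnerProductSpace ℂ H] [CompleteSpace H]
    (E : (H →L[ℂ] H) → ENNReal)
    (hunitary : ∀ (U : H ≃ₗᵢ[ℂ] H) (T : H →L[ℂ] H),
      E (U.symm.toLinearIsometry.toContinuousLinearMap ∘L T ∘L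
          U.toLinearIsometry.toContinuousLinearMap) = E T)
    (horth : ∀ S T : H →L[ℂ] H, IsSelfAdjoint S → IsSelfAdjoint T →
      S ∘L T = 0 → E (S + T) = E S + E T)
    (hzero : E 0 = 0)
    (e : H) (he : ‖e‖ = 1)
    (m : ℕ) (K : Fin m → Submodule ℂ H) [∀ j, FiniteDimensional ℂ (K j)]
    (hKorth : ∀ i j : Fin m, i ≠ j → ∀ x ∈ K i, ∀ y ∈ K j, (inner ℂ x y : ℂ) = 0)
    (lam : Fin m → ℝ) :
    E (∑ j, (lam j : ℂ) • ((K j).subtypeL ∘L Submodule.orthogonalProjectionOnto (K j))) =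
      ∑ j, (Module.finrank ℂ (K j)) •
        E ((lam j : ℂ) • ((ℂ ∙ e).subtypeL ∘L Submodule.orthogonalProjectionOnto (ℂ ∙ e))) := by
  have hU : IsUnitarilyInvariant E := hunitary
  have hA : IsOrthogonallyAdditive E := horth
  change E (∑ j, (lam j : ℂ) • (K j).starProjection) =
    ∑ j, Module.finrank ℂ (K j) • E ((lam j : ℂ) • (ℂ ∙ e).starProjection)
  rw [hA.map_sum hzero]
  · exact Finset.sum_congr rfl fun j _ ↦ hU.apply_smul_starProjection hA hzero he (K j) (lam j)
  · exact fun j _ ↦ IsSelfAdjoint.smul (RCLike.conj_ofReal _) (isSelfAdjoint_starProjection _)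
  · intro i _ j _ hij
    rw [mul_def, smul_comp, comp_smul,
      (Submodule.isOrtho_iff_inner_eq.2 (hKorth i j hij)).starProjection_comp_starProjection,
      smul_zero, smul_zero]
end

section
/- Fix a nonempty finite type n with decidable equality. Let h, h̃ : ℝ → ℝ with h 0 = 0 and h̃ 0 = 0, and let c > 0 be a real constant. Suppose that for every X : Matrix n n ℂ with hX : X.IsHermitian one has ∑ i, h (hX.eigenvalues i) = c * ∑ i, h̃ (hX.eigenvalues i). Then h t = c * h̃ t for every t : ℝ. -/
/-! Test the identity on the scalar matrix `t • 1`, all of whose eigenvalues equal `t`. -/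

namespace Matrix.IsHermitian

variable {𝕜 n : Type*} [RCLike 𝕜] [Fintype n] [DecidableEq n] [Nonempty n] {A : Matrix n n 𝕜}

theorem eigenvalues_eq_of_eq_algebraMap (hA : A.IsHermitian) {t : ℝ}
    (hAt : A = algebraMap ℝ (Matrix n n 𝕜) t) (i : n) : hA.eigenvalues i = t := by
  simpa [hAt, spectrum.scalar_eq] using hA.eigenvalues_mem_spectrum_real i

theorem sum_comp_eigenvalues_of_eq_algebraMap (hA : A.IsHermitian) {t : ℝ}
    (hAt : A = algebraMap ℝ (Matrix n n 𝕜) t) (f : ℝ → ℝ) :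
    ∑ i, f (hA.eigenvalues i) = Fintype.card n * f t := by
  simp [hA.eigenvalues_eq_of_eq_algebraMap hAt]

end Matrix.IsHermitian

theorem profile_uniqueness_general
    {n : Type*} [Fintype n] [DecidableEq n] [Nonempty n]
    (h htilde : ℝ → ℝ)
    (c : ℝ)
    (heq : ∀ (X : Matrix n n ℂ) (hX : X.IsHermitian),
      ∑ i, h (hX.eigenvalues i) = c * ∑ i, htilde (hX.eigenvalues i)) :
    ∀ t : ℝ, h t = c * htilde t := by
  intro t
  have hX : (algebraMap ℝ (Matrix n n ℂ) t).IsHermitian := IsSelfAdjoint.algebraMap _ (.all t)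
  have hsum := heq _ hX
  rw [hX.sum_comp_eigenvalues_of_eq_algebraMap rfl, hX.sum_comp_eigenvalues_of_eq_algebraMap rfl]
    at hsum
  exact mul_left_cancel₀ (Nat.cast_ne_zero.2 Fintype.card_ne_zero) (by rw [hsum]; ring)

theorem profile_uniqueness
    {n : Type*} [Fintype n] [DecidableEq n] [Nonempty n]
    (h htilde : ℝ → ℝ) (hh0 : h 0 = 0) (hht0 : htilde 0 = 0)
    (c : ℝ) (hc : 0 < c)
    (heq : ∀ (X : Matrix n n ℂ) (hX : X.IsHermitian),
      ∑ i, h (hX.eigenvalues i) = c * ∑ i, htilde (hX.eigenvalues i)) :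
    ∀ t : ℝ, h t = c * htilde t :=
  profile_uniqueness_general h htilde c heq
end
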